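/- Every computably enumerable non-computable set A ⊆ ℕ can be split into two disjoint computably enumerable recursively inseparable sets: there exist c.e. sets A₀, A₁ with A₀ ∩ A₁ = ∅, A₀ ∪ A₁ = A, and A₀, A₁ recursively inseparable. -/

import Mathlib

/-- Partial functions `ℕ →. ℕ` computable relative to an oracle `O : ℕ →. ℕ`
(the oracle analogue of `Nat.Partrec`). -/
inductive OracleRecursiveIn (O : ℕ →. ℕ) : (ℕ →. ℕ) → Prop
  | oracle : OracleRecursiveIn O O
  | zero : OracleRecursiveIn O (pure 0)
  | succ : OracleRecursiveIn O ↑Nat.succ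
  | left : OracleRecursiveIn O ↑fun n : ℕ => n.unpair.1
  | right : OracleRecursiveIn O ↑fun n : ℕ => n.unpair.2
  | pair {f g : ℕ →. ℕ} : OracleRecursiveIn O f → OracleRecursiveIn O g →
      OracleRecursiveIn O fun n => Nat.pair <$> f n <*> g n
  | comp {f g : ℕ →. ℕ} : OracleRecursiveIn O f → OracleRecursiveIn O g →
      OracleRecursiveIn O fun n => g n >>= f
  | prec {f g : ℕ →. ℕ} : OracleRecursiveIn O f → OracleRecursiveIn O g →
      OracleRecursiveIn O (Nat.unpaired fun a n =>
        n.rec (f a) fun y IH => do let i ← IH; g (Nat.pair a (Nat.pair y i)))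
  | rfind {f : ℕ →. ℕ} : OracleRecursiveIn O f →
      OracleRecursiveIn O fun a => Nat.rfind fun n => (fun m => m = 0) <$> f (Nat.pair a n)

open Classical in
/-- The characteristic function of a set of naturals, as a partial function. -/
noncomputable def Set.chi (A : Set ℕ) : ℕ →. ℕ :=
  fun n => Part.some (if n ∈ A then 1 else 0)

/-- Turing reducibility for sets of naturals. -/
def TRed (A B : Set ℕ) : Prop := OracleRecursiveIn B.chi A.chi

/-- Turing incomparability. -/
def TIncomp (A B : Set ℕ) : Prop := ¬ TRed A B ∧ ¬ TRed B A

/-- A set is computably enumerable if it is the domain of a partial computable function. -/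
def CE (A : Set ℕ) : Prop := ∃ f : ℕ →. ℕ, Partrec f ∧ ∀ n, n ∈ A ↔ (f n).Dom

/-- Two sets are recursively inseparable if no computable set separates them. -/
def RecInsep (A B : Set ℕ) : Prop :=
  ¬ ∃ D : Set ℕ, ComputablePred (· ∈ D) ∧ A ⊆ D ∧ B ∩ D = ∅

/-- `D` is a separator for the pair `⟨A, B⟩`. -/
def Separator (A B D : Set ℕ) : Prop := A ⊆ D ∧ B ∩ D = ∅

/-- The halting problem `∅′`. -/
def haltingSet : Set ℕ :=
  {e | ((Denumerable.ofNat Nat.Partrec.Code e).eval e).Dom}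

/-!
Enumerate `A = dom φ_c` so that a number `n` entering at step `s` is handled at stage `⟨n, s⟩`,
and let requirement `e` ask that `φ_e` is not the characteristic function of a separator.
At the stage handling `n`, the least requirement `e < t` that has not acted yet and whose
`φ_e(n)` converges within `t` steps acts, once and for all: `n` goes into `A₀` if `φ_e(n) = 0`
and into `A₁` otherwise, so `φ_e` is wrong about `n`.

If `φ_e` were the characteristic function of a computable separator, requirement `e` would never
act. Each requirement acts at most once, so from some stage `T` on none below `e` acts either,
and then `φ_e(n)` has not converged yet whenever a number `n` is handled. Hence `n ∉ A` iff
`φ_e(n)` converges within some `k` steps while `n` has not entered `A` by step `T + k`, which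
makes the complement of `A` c.e. and `A` computable.
-/
open Nat.Partrec (Code)
open Nat.Partrec.Code Encodable Denumerable Filter

theorem CE.exists_code {A : Set ℕ} (hA : CE A) :
    ∃ c : Code, ∀ n, n ∈ A ↔ (eval c n).Dom := by
  obtain ⟨f, hf, hfA⟩ := hA
  obtain ⟨c, rfl⟩ := Code.exists_code.1 (Partrec.nat_iff.1 hf)
  exact ⟨c, hfA⟩

theorem CE.of_rePred {A : Set ℕ} (hA : REPred (· ∈ A)) : CE A :=
  ⟨_, hA.map (Computable.const 0).to₂, fun n => by simp [Part.assert]⟩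

theorem REPred.exists_of_primrecRel {α : Type*} [Primcodable α] {p : α → ℕ → Prop}
    [DecidableRel p] (hp : PrimrecRel p) : REPred fun a => ∃ k, p a k :=
  (Partrec.rfind hp.decide.to_comp.partrec₂).dom_re.of_eq fun a => by
    simp [Nat.rfind_dom]

theorem exists_code_eval_eq_chi {D : Set ℕ} (hD : ComputablePred (· ∈ D)) :
    ∃ d : Code, eval d = D.chi := by
  obtain ⟨f, hf, hfD⟩ := ComputablePred.computable_iff.1 hD
  obtain ⟨d, hd⟩ :=
    Code.exists_code.1 (Partrec.nat_iff.1 (hf.cond (.const 1) (.const 0)).partrec)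
  refine ⟨d, hd.trans (funext fun n => ?_)⟩
  have hn : n ∈ D ↔ f n = true := iff_of_eq (congrFun hfD n)
  by_cases h : f n <;> simp [Set.chi, h, hn]

namespace InseparableSplitting

section Enumeration

variable {c : Code} {n s s' m : ℕ}

def EntersAt (c : Code) (n s : ℕ) : Prop :=
  (evaln (s + 1) c n).isSome ∧ evaln s c n = none

instance (c : Code) : DecidableRel (EntersAt c) := fun _ _ => instDecidableAnd

theorem primrecRel_entersAt (c : Code) : PrimrecRel (EntersAt c) := by
  have hev : Primrec fun p : ℕ × ℕ => evaln p.1 c p.2 :=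
    primrec_evaln.comp ((Primrec.fst.pair (Primrec.const c)).pair Primrec.snd)
  show PrimrecPred fun p : ℕ × ℕ =>
    (evaln (p.2 + 1) c p.1).isSome = true ∧ evaln p.2 c p.1 = none
  exact (Primrec.eq.comp (Primrec.option_isSome.comp (hev.comp
      ((Primrec.succ.comp Primrec.snd).pair Primrec.fst))) (Primrec.const true)).and
    (Primrec.eq.comp (hev.comp (Primrec.snd.pair Primrec.fst)) (Primrec.const none))

theorem EntersAt.evaln_isSome (h : EntersAt c n s) (hsm : s < m) : (evaln m c n).isSome := by
  obtain ⟨v, hv⟩ := Option.isSome_iff_exists.1 h.1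
  exact Option.isSome_iff_exists.2 ⟨v, evaln_mono hsm hv⟩

theorem EntersAt.unique (h : EntersAt c n s) (h' : EntersAt c n s') : s = s' := by
  by_contra hne
  rcases Nat.lt_or_gt_of_ne hne with hlt | hlt
  · exact Option.isSome_iff_ne_none.1 (h.evaln_isSome hlt) h'.2
  · exact Option.isSome_iff_ne_none.1 (h'.evaln_isSome hlt) h.2

theorem dom_iff_exists_entersAt : (eval c n).Dom ↔ ∃ s, EntersAt c n s := by
  constructor
  · intro h
    obtain ⟨k, hk⟩ := evaln_complete.1 (Part.get_mem h)
    have hex : ∃ k, (evaln k c n).isSome := ⟨k, Option.isSome_iff_exists.2 ⟨_, hk⟩⟩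
    classical
    obtain ⟨s, hs⟩ : ∃ s, Nat.find hex = s + 1 :=
      Nat.exists_eq_succ_of_ne_zero fun h0 => by simpa [h0, evaln] using Nat.find_spec hex
    refine ⟨s, hs ▸ Nat.find_spec hex, ?_⟩
    simpa using Nat.find_min hex (show s < Nat.find hex by omega)
  · rintro ⟨s, hs, -⟩
    obtain ⟨v, hv⟩ := Option.isSome_iff_exists.1 hs
    exact Part.dom_iff_mem.2 ⟨v, evaln_sound hv⟩

end Enumeration

section Construction

variable (c : Code) {t t' e : ℕ}

def pick (t n : ℕ) (E : List ℕ) : Option ℕ :=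
  (List.range t).find? fun e => e ∉ E ∧ (evaln t (ofNat Code e) n).isSome

def actWith (t : ℕ) (E : List ℕ) : Option ℕ :=
  if EntersAt c t.unpair.1 t.unpair.2 then pick t t.unpair.1 E else none

def satisfied : ℕ → List ℕ
  | 0 => []
  | t + 1 => (actWith c t (satisfied t)).elim (satisfied t) (· :: satisfied t)

def act (t : ℕ) : Option ℕ := actWith c t (satisfied c t)

variable {c}

theorem mem_satisfied_iff : e ∈ satisfied c t ↔ ∃ t' < t, act c t' = some e := by
  induction t with
  | zero => simp [satisfied]
  | succ t ih =>
    rw [satisfied, ← act, Nat.exists_lt_succ_right, ← ih]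
    cases act c t <;> simp [or_comm, eq_comm]

theorem act_eq_some (h : act c t = some e) :
    EntersAt c t.unpair.1 t.unpair.2 ∧ e ∉ satisfied c t ∧
      (evaln t (ofNat Code e) t.unpair.1).isSome := by
  simp only [act, actWith, pick] at h
  split_ifs at h with hent
  simp only [List.find?_range_eq_some, decide_eq_true_eq] at h
  exact ⟨hent, h.1⟩

theorem exists_act_eq_some_le (hent : EntersAt c t.unpair.1 t.unpair.2) (he : e ∉ satisfied c t)
    (het : e < t) (hconv : (evaln t (ofNat Code e) t.unpair.1).isSome) :
    ∃ e' ≤ e, act c t = some e' := by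
  simp only [act, actWith, pick, if_pos hent]
  cases h : (List.range t).find? _ with
  | none => simpa [he, hconv] using (List.find?_range_eq_none.1 h) e het
  | some e' =>
    refine ⟨e', not_lt.1 fun hlt => ?_, rfl⟩
    simpa [he, hconv] using (List.find?_range_eq_some.1 h).2.2 e hlt

theorem act_inj (h : act c t = some e) (h' : act c t' = some e) : t = t' := by
  by_contra hne
  rcases Nat.lt_or_gt_of_ne hne with hlt | hlt
  · exact (act_eq_some h').2.1 (mem_satisfied_iff.2 ⟨t, hlt, h⟩)
  · exact (act_eq_some h).2.1 (mem_satisfied_iff.2 ⟨t', hlt, h'⟩)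

theorem eventually_act_ne (e : ℕ) : ∀ᶠ t in atTop, act c t ≠ some e := by
  have hfin : {t | act c t = some e}.Finite :=
    Set.Subsingleton.finite fun _ ht _ ht' => act_inj ht ht'
  simpa [Nat.cofinite_eq_atTop] using hfin.eventually_cofinite_notMem

theorem eventually_evaln_eq_none (hne : ∀ t, act c t ≠ some e) :
    ∀ᶠ t in atTop,
      EntersAt c t.unpair.1 t.unpair.2 → evaln t (ofNat Code e) t.unpair.1 = none := by
  filter_upwards [(eventually_all_finite (Set.finite_Iic e)).2 fun e' _ => eventually_act_ne e',
    eventually_gt_atTop e] with t hlow het hent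
  by_contra hconv
  have hsat : e ∉ satisfied c t := fun hmem =>
    let ⟨t', _, ht'⟩ := mem_satisfied_iff.1 hmem
    hne t' ht'
  obtain ⟨e', hle, hact⟩ :=
    exists_act_eq_some_le hent hsat het (Option.ne_none_iff_isSome.1 hconv)
  exact hlow e' hle hact

end Construction

section Primrec

theorem primrec_pick : Primrec fun x : (ℕ × ℕ) × List ℕ => pick x.1.1 x.1.2 x.2 := by
  have hmem : PrimrecRel fun (L : List ℕ) (e : ℕ) => e ∈ L :=
    (PrimrecRel.exists_mem_list Primrec.eq).of_eq fun L e => by simp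
  have hR : PrimrecRel fun (e : ℕ) (x : (ℕ × ℕ) × List ℕ) =>
      e ∉ x.2 ∧ (evaln x.1.1 (ofNat Code e) x.1.2).isSome = true :=
    (hmem.comp (Primrec.snd.comp Primrec.snd) Primrec.fst).not.and
      (Primrec.eq.comp (Primrec.option_isSome.comp (primrec_evaln.comp
        (((Primrec.fst.comp (Primrec.fst.comp Primrec.snd)).pair
          ((Primrec.ofNat Code).comp Primrec.fst)).pair
          (Primrec.snd.comp (Primrec.fst.comp Primrec.snd))))) (Primrec.const true))
  exact (Primrec.list_head?.comp ((PrimrecRel.listFilter hR).comp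
    (Primrec.list_range.comp (Primrec.fst.comp Primrec.fst)) Primrec.id)).of_eq fun x => by
      simp [pick, List.head?_filter]

theorem primrec_actWith (c : Code) : Primrec₂ (actWith c) :=
  Primrec.ite ((primrecRel_entersAt c).comp (Primrec.fst.comp (Primrec.unpair.comp Primrec.fst))
      (Primrec.snd.comp (Primrec.unpair.comp Primrec.fst)))
    (primrec_pick.comp
      ((Primrec.fst.pair (Primrec.fst.comp (Primrec.unpair.comp Primrec.fst))).pair Primrec.snd))
    (Primrec.const none)

theorem primrec_satisfied (c : Code) : Primrec (satisfied c) := by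
  have hstep : Primrec₂ fun (t : ℕ) (E : List ℕ) => (actWith c t E).elim E (· :: E) :=
    (Primrec.option_casesOn (primrec_actWith c) Primrec.snd
      (Primrec.list_cons.comp Primrec.snd (Primrec.snd.comp Primrec.fst)).to₂).of_eq
      fun x => by dsimp only; cases actWith c x.1 x.2 <;> rfl
  refine (Primrec.nat_rec₁ [] hstep).of_eq fun t => ?_
  induction t with
  | zero => rfl
  | succ t ih => simp only [satisfied, ← ih]

theorem primrec_act (c : Code) : Primrec (act c) :=
  (primrec_actWith c).comp Primrec.id (primrec_satisfied c)

end Primrec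

section Halves

variable (c : Code) {t e : ℕ}

def goesRight (t : ℕ) : Bool :=
  decide (((act c t).bind fun e => evaln t (ofNat Code e) t.unpair.1) ≠ some 0)

def half (b : Bool) : Set ℕ := {n | ∃ s, EntersAt c n s ∧ goesRight c (Nat.pair n s) = b}

theorem primrec_goesRight : Primrec (goesRight c) :=
  (Primrec.eq.comp (Primrec.option_bind (primrec_act c)
    (primrec_evaln.comp ((Primrec.fst.pair ((Primrec.ofNat Code).comp Primrec.snd)).pair
      (Primrec.fst.comp (Primrec.unpair.comp Primrec.fst)))).to₂)
    (Primrec.const (some 0))).not.decide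

theorem ce_half (b : Bool) : CE (half c b) :=
  .of_rePred <| REPred.exists_of_primrecRel <| (primrecRel_entersAt c).and
    (Primrec.eq.comp ((primrec_goesRight c).comp Primrec₂.natPair) (Primrec.const b))

theorem half_false_inter_half_true : half c false ∩ half c true = ∅ := by
  refine Set.eq_empty_iff_forall_notMem.2 fun n ⟨⟨s, hs, hfalse⟩, s', hs', htrue⟩ => ?_
  rw [hs.unique hs', htrue] at hfalse
  exact Bool.noConfusion hfalse

theorem half_false_union_half_true : half c false ∪ half c true = {n | (eval c n).Dom} := by
  ext n
  simp [half, dom_iff_exists_entersAt, ← exists_or, ← and_or_left]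

variable {c}

theorem mem_half_of_act_eq_some (h : act c t = some e) :
    ∃ v ∈ eval (ofNat Code e) t.unpair.1, t.unpair.1 ∈ half c (decide (v ≠ 0)) := by
  obtain ⟨hent, -, hconv⟩ := act_eq_some h
  obtain ⟨v, hv⟩ := Option.isSome_iff_exists.1 hconv
  exact ⟨v, evaln_sound hv, t.unpair.2, hent, by simp [goesRight, h, hv]⟩

end Halves

section Inseparability

variable {c : Code}

theorem act_ne_of_separator {D : Set ℕ} (hD : Separator (half c false) (half c true) D)
    {d : Code} (hd : eval d = D.chi) (t : ℕ) : act c t ≠ some (encode d) := by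
  intro h
  obtain ⟨v, hv, hmem⟩ := mem_half_of_act_eq_some h
  rw [ofNat_encode, hd, Set.chi, Part.mem_some_iff] at hv
  by_cases hn : t.unpair.1 ∈ D
  · rw [if_pos hn] at hv
    subst hv
    exact (Set.eq_empty_iff_forall_notMem.1 hD.2) _ ⟨hmem, hn⟩
  · rw [if_neg hn] at hv
    subst hv
    exact hn (hD.1 hmem)

theorem computablePred_dom_of_act_ne {e : ℕ} (htot : ∀ n, (eval (ofNat Code e) n).Dom)
    (hne : ∀ t, act c t ≠ some e) : ComputablePred fun n => (eval c n).Dom := by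
  obtain ⟨T, hT⟩ := eventually_atTop.1 (eventually_evaln_eq_none hne)
  have hco : REPred fun n => ∃ k,
      (evaln k (ofNat Code e) n).isSome = true ∧ evaln (T + k) c n = none := by
    refine REPred.exists_of_primrecRel <|
      (Primrec.eq.comp (Primrec.option_isSome.comp (primrec_evaln.comp
        ((Primrec.snd.pair (Primrec.const _)).pair Primrec.fst))) (Primrec.const true)).and
      (Primrec.eq.comp (primrec_evaln.comp
        (((Primrec.nat_add.comp (Primrec.const T) Primrec.snd).pair (Primrec.const c)).pair
          Primrec.fst)) (Primrec.const none))
  refine ComputablePred.computable_iff_re_compl_re'.2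
    ⟨(eval_part.comp (.const c) .id).dom_re, hco.of_eq fun n => ⟨?_, fun hn => ?_⟩⟩
  · rintro ⟨k, hk, hnone⟩ hdom
    obtain ⟨s, hs⟩ := dom_iff_exists_entersAt.1 hdom
    have hks : T + k ≤ s := not_lt.1 fun hlt => by simpa [hnone] using hs.evaln_isSome hlt
    have hlate := hT (Nat.pair n s) (le_trans (by omega) (Nat.right_le_pair n s))
    simp only [Nat.unpair_pair] at hlate
    obtain ⟨v, hv⟩ := Option.isSome_iff_exists.1 hk
    simpa [hlate hs] using evaln_mono (le_trans (by omega) (Nat.right_le_pair n s)) hv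
  · obtain ⟨k, hk⟩ := evaln_complete.1 (Part.get_mem (htot n))
    refine ⟨k, Option.isSome_iff_exists.2 ⟨_, hk⟩, ?_⟩
    cases h : evaln (T + k) c n with
    | none => rfl
    | some v => exact absurd (Part.dom_iff_mem.2 ⟨v, evaln_sound h⟩) hn

end Inseparability

end InseparableSplitting

open InseparableSplitting in
theorem stmt15 (A : Set ℕ) (hA : CE A) (hA' : ¬ ComputablePred (· ∈ A)) :
    ∃ A₀ A₁ : Set ℕ, CE A₀ ∧ CE A₁ ∧ A₀ ∩ A₁ = ∅ ∧ A₀ ∪ A₁ = A ∧ RecInsep A₀ A₁ := by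
  obtain ⟨c, hc⟩ := hA.exists_code
  obtain rfl : A = {n | (eval c n).Dom} := Set.ext hc
  refine ⟨half c false, half c true, ce_half c false, ce_half c true,
    half_false_inter_half_true c, half_false_union_half_true c, ?_⟩
  rintro ⟨D, hD, hsep⟩
  obtain ⟨d, hd⟩ := exists_code_eval_eq_chi hD
  have htot : ∀ n, (eval (ofNat Code (encode d)) n).Dom := by simp [ofNat_encode, hd, Set.chi]
  exact hA' (computablePred_dom_of_act_ne htot (act_ne_of_separator hsep hd))
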